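/- For the solution w_n of the previous item with 0 ≤ b² < 1 fixed, for every fixed t > 0 the L²(unit disk) norms ‖w_n(t,·)‖ tend to infinity as n → ∞, while the initial data (w_n(0), ẇ_n(0)) = (0, e^{-n^{1/4}} z̄ⁿ) tend to 0 in every Hˢ norm. Specifically, ‖e^{-n^{1/4}} sinh(√((1-b²)(n-1)) t) z̄ⁿ‖_{L²(D)}² = (π/(n+1)) e^{-2n^{1/4}} sinh²(√((1-b²)(n-1)) t) → ∞ as n → ∞ for each t > 0. -/

import Mathlib

/-!
In polar coordinates `∫_D |z|^{2n} dA = π/(n+1)`, which gives the closed form of the squared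
norm. Writing `u = n^{1/4}`, we have `n + 1 ≤ e^{4u}` and `√(n-1) ≥ u²/2`, while
`sinh x ≥ eˣ/4` for large `x`; so the closed form is at least `(π/16) e^{u(cu - 6)}` with
`c = t√(1-b²)`, which tends to infinity. The initial data decay like `e^{-n^{1/4}}`, faster
than any power of `n`.
-/

open MeasureTheory Filter
open Metric Set Real

theorem setIntegral_ball_norm_pow {E : Type*} [NormedAddCommGroup E] [NormedSpace ℝ E]
    [MeasurableSpace E] [BorelSpace E] [FiniteDimensional ℝ E] [Nontrivial E]
    (μ : Measure E) [μ.IsAddHaarMeasure] (p : ℕ) :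
    ∫ x in ball (0 : E) 1, ‖x‖ ^ p ∂μ
      = Module.finrank ℝ E / (p + Module.finrank ℝ E) * μ.real (ball 0 1) := by
  set d := Module.finrank ℝ E
  have hd : 0 < d := Module.finrank_pos
  have hball : ∫ x in ball (0 : E) 1, ‖x‖ ^ p ∂μ = ∫ x, (Iio 1).indicator (· ^ p) ‖x‖ ∂μ := by
    rw [← integral_indicator measurableSet_ball]
    congr 1 with x
    by_cases hx : x ∈ ball (0 : E) 1 <;> simp_all [indicator]
  have hradial : ∫ y in Ioi (0 : ℝ), y ^ (d - 1) • (Iio 1).indicator (· ^ p) y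
      = 1 / (p + d) := by
    rw [← integral_indicator measurableSet_Ioi]
    have hpd : ((p + d - 1 : ℕ) : ℝ) + 1 = p + d := by
      rw [Nat.cast_sub (by omega)]; push_cast; ring
    calc _ = ∫ y in (0 : ℝ)..1, y ^ (p + d - 1) := by
          rw [intervalIntegral.integral_of_le zero_le_one, integral_Ioc_eq_integral_Ioo,
            ← integral_indicator measurableSet_Ioo]
          congr 1 with y
          by_cases h0 : 0 < y <;> by_cases h1 : y < 1 <;>
            simp [indicator, h0, h1, ← pow_add, Nat.sub_add_comm hd, add_comm p]
      _ = 1 / (p + d) := by simp [integral_pow, hpd]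
  rw [hball, integral_fun_norm_addHaar, hradial, nsmul_eq_mul, smul_eq_mul]
  ring

theorem Complex.setIntegral_ball_norm_ofReal_mul_conj_pow_sq (r : ℝ) (n : ℕ) :
    ∫ z in ball (0 : ℂ) 1, ‖(r : ℂ) * (starRingEnd ℂ z) ^ n‖ ^ 2 = π / (n + 1) * r ^ 2 := by
  have hnorm (z : ℂ) : ‖(r : ℂ) * (starRingEnd ℂ z) ^ n‖ ^ 2 = r ^ 2 * ‖z‖ ^ (2 * n) := by
    rw [norm_mul, norm_pow, Complex.norm_real, RCLike.norm_conj, mul_pow, ← pow_mul,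
      Real.norm_eq_abs, sq_abs, mul_comm n]
  simp_rw [hnorm]
  rw [integral_const_mul, setIntegral_ball_norm_pow, Complex.finrank_real_complex,
    measureReal_def, Complex.volume_ball]
  push_cast
  field_simp
  simp

theorem one_add_pow_le_exp_mul {x : ℝ} (hx : 0 ≤ x) {n : ℕ} (hn : n ≠ 0) :
    1 + x ^ n ≤ exp (n * x) := by
  calc 1 + x ^ n = 1 ^ n + x ^ n := by rw [one_pow]
    _ ≤ (1 + x) ^ n := pow_add_pow_le zero_le_one hx hn
    _ ≤ exp x ^ n := by gcongr; linarith [add_one_le_exp x]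
    _ = exp (n * x) := (exp_nat_mul x n).symm

theorem exp_div_four_le_sinh {x : ℝ} (hx : log 2 ≤ x) : exp x / 4 ≤ sinh x := by
  have h2 : 2 ≤ exp x := by simpa [exp_log] using exp_le_exp.2 hx
  have hneg : exp (-x) ≤ 1 := exp_le_one_iff.2 (by linarith [log_pos one_lt_two])
  rw [sinh_eq]
  linarith

theorem tendsto_div_mul_exp_neg_rpow_sq_mul_sinh_sq {c : ℝ} (hc : 0 < c) :
    Tendsto (fun y : ℝ => π / (y + 1) * exp (-y ^ (1 / 4 : ℝ)) ^ 2 * sinh (c * √(y - 1)) ^ 2)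
      atTop atTop := by
  have hlower : Tendsto (fun u : ℝ => π / 16 * exp (u * (c * u - 6))) atTop atTop := by
    refine (tendsto_exp_atTop.comp (tendsto_id.atTop_mul_atTop₀ ?_)).const_mul_atTop (by positivity)
    exact tendsto_atTop_add_const_right _ (-6) (tendsto_id.const_mul_atTop hc)
  have hsinh_arg : Tendsto (fun y : ℝ => c * √(y - 1)) atTop atTop :=
    (tendsto_sqrt_atTop.comp (tendsto_atTop_add_const_right _ (-1) tendsto_id)).const_mul_atTop hc
  refine tendsto_atTop_mono' _ ?_ (hlower.comp (tendsto_rpow_atTop (by norm_num : (0 : ℝ) < 1 / 4)))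
  filter_upwards [eventually_ge_atTop 2, hsinh_arg.eventually_ge_atTop (log 2)] with y hy hx
  set u := y ^ (1 / 4 : ℝ)
  set x := c * √(y - 1)
  have hu : 0 ≤ u := by positivity
  have hu4 : u ^ 4 = y := by
    rw [← rpow_natCast, ← rpow_mul (by linarith)]; norm_num
  have hpoly : exp (-(4 * u)) ≤ 1 / (y + 1) := by
    rw [exp_neg, one_div]
    gcongr
    simpa [← hu4, add_comm] using one_add_pow_le_exp_mul hu (n := 4) (by norm_num)
  have hsqrt : c * u ^ 2 / 2 ≤ x := by
    have : u ^ 2 / 2 ≤ √(y - 1) := by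
      rw [le_sqrt (by positivity) (by linarith)]
      have hu4' : (u ^ 2 / 2) ^ 2 = y / 4 := by rw [← hu4]; ring
      linarith
    rw [mul_div_assoc]
    exact mul_le_mul_of_nonneg_left this hc.le
  have hsinh : exp (c * u ^ 2 / 2) / 4 ≤ sinh x :=
    (div_le_div_of_nonneg_right (exp_le_exp.2 hsqrt) (by norm_num)).trans (exp_div_four_le_sinh hx)
  calc π / 16 * exp (u * (c * u - 6))
      = π * exp (-(4 * u)) * exp (-u) ^ 2 * (exp (c * u ^ 2 / 2) / 4) ^ 2 := by
        have hexp : exp (u * (c * u - 6))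
            = exp (-(4 * u)) * exp (-u) ^ 2 * exp (c * u ^ 2 / 2) ^ 2 := by
          rw [← exp_nat_mul, ← exp_nat_mul, ← exp_add, ← exp_add]
          ring_nf
        rw [hexp]
        ring
    _ ≤ π * (1 / (y + 1)) * exp (-u) ^ 2 * sinh x ^ 2 := by gcongr
    _ = π / (y + 1) * exp (-u) ^ 2 * sinh x ^ 2 := by ring

theorem tendsto_rpow_mul_exp_neg_rpow_atTop_nhds_zero (s : ℝ) {r : ℝ} (hr : 0 < r) :
    Tendsto (fun y : ℝ => y ^ s * exp (-y ^ r)) atTop (nhds 0) := by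
  refine ((tendsto_rpow_mul_exp_neg_mul_atTop_nhds_zero (s / r) 1 one_pos).comp
    (tendsto_rpow_atTop hr)).congr' ?_
  filter_upwards [eventually_ge_atTop 0] with y hy
  rw [Function.comp_apply, ← rpow_mul hy, mul_div_cancel₀ s hr.ne', neg_one_mul]

/-- For fixed `t > 0` the L² norms on the unit disk of
`e^{-n^{1/4}} sinh(√((1-b²)(n-1)) t) z̄ⁿ` are given by the explicit formula
`(π/(n+1)) e^{-2n^{1/4}} sinh²(√((1-b²)(n-1)) t)` and tend to infinity as `n → ∞`,
while the initial data decay faster than any power of `n` (hence tend to `0` in every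
Sobolev norm). -/
theorem illposedness_growth (b t : ℝ) (hb : b ^ 2 < 1) (ht : 0 < t) :
    (∀ n : ℕ,
      (∫ z in Metric.ball (0 : ℂ) 1,
        ‖((Real.exp (-(n : ℝ) ^ ((1 : ℝ) / 4))
            * Real.sinh (Real.sqrt ((1 - b ^ 2) * ((n : ℝ) - 1)) * t) : ℝ) : ℂ)
          * (starRingEnd ℂ z) ^ n‖ ^ 2)
        = Real.pi / ((n : ℝ) + 1) * (Real.exp (-(n : ℝ) ^ ((1 : ℝ) / 4))) ^ 2
            * (Real.sinh (Real.sqrt ((1 - b ^ 2) * ((n : ℝ) - 1)) * t)) ^ 2) ∧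
    Tendsto (fun n : ℕ =>
        Real.pi / ((n : ℝ) + 1) * (Real.exp (-(n : ℝ) ^ ((1 : ℝ) / 4))) ^ 2
          * (Real.sinh (Real.sqrt ((1 - b ^ 2) * ((n : ℝ) - 1)) * t)) ^ 2)
      atTop atTop ∧
    (∀ k : ℕ, Tendsto (fun n : ℕ => (n : ℝ) ^ k * Real.exp (-(n : ℝ) ^ ((1 : ℝ) / 4)))
      atTop (nhds 0)) := by
  have hc : 0 < √(1 - b ^ 2) * t := mul_pos (sqrt_pos.2 (by linarith)) ht
  have hsinh_arg (y : ℝ) : √((1 - b ^ 2) * (y - 1)) * t = (√(1 - b ^ 2) * t) * √(y - 1) := by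
    rw [sqrt_mul (by linarith)]
    ring
  refine ⟨fun n => ?_, ?_, fun k => ?_⟩
  · rw [Complex.setIntegral_ball_norm_ofReal_mul_conj_pow_sq]
    ring
  · simp only [hsinh_arg]
    exact (tendsto_div_mul_exp_neg_rpow_sq_mul_sinh_sq hc).comp tendsto_natCast_atTop_atTop
  · have hdecay := (tendsto_rpow_mul_exp_neg_rpow_atTop_nhds_zero k
      (by norm_num : (0 : ℝ) < 1 / 4)).comp tendsto_natCast_atTop_atTop
    simpa only [Function.comp_def, rpow_natCast] using hdecay
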